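/- arXiv:0911.5615 — 2 statements merged into one kernel-verified Lean document; each statement's English description precedes it below -/
import Mathlib

section
/- Let k ≥ 2 and n ≥ 0. Every equivalence class of ≡_k on S_n contains exactly one k-minimal permutation α, and this α satisfies Inv(α) ⊆ Inv(σ) for every σ in the class (it is the minimum of the class for the right weak order). -/
/-- The `k`-recoil equivalence `≡_k` on `Equiv.Perm (Fin n)`.
Values are 0-indexed: `a : Fin n` represents the value `a+1` of the paper.
`σ ≡_k τ` iff for all values `a < b` with `b - a < k`,
`σ⁻¹(a) < σ⁻¹(b) ↔ τ⁻¹(a) < τ⁻¹(b)`. -/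
def recoilEquiv (k n : ℕ) (σ τ : Equiv.Perm (Fin n)) : Prop :=
  ∀ a b : Fin n, (a : ℕ) < b → (b : ℕ) - a < k →
    (σ.symm a < σ.symm b ↔ τ.symm a < τ.symm b)

/-- The inversion set of a permutation: pairs of values `a < b` that appear
in the order `… b … a …` in the one-line word of `σ`. -/
def invSet {n : ℕ} (σ : Equiv.Perm (Fin n)) : Set (Fin n × Fin n) :=
  {p | p.1 < p.2 ∧ σ.symm p.2 < σ.symm p.1}

/-- The extension `σ̃ : ℤ → ℤ` of `σ ∈ S_n` (1-indexed) fixing all `i ∉ [1, n]`. -/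
def extPerm {n : ℕ} (σ : Equiv.Perm (Fin n)) : ℤ → ℤ := fun i =>
  if h : 0 < i ∧ i ≤ (n : ℤ) then ((σ ⟨(i - 1).toNat, by omega⟩ : Fin n) : ℤ) + 1 else i

/-- The `k`-descent code: `DC k σ ℓ` is `d_{ℓ+1}` of the paper, the rank of
`σ̃(ℓ+1)` among the `k` entries `σ̃(ℓ+1-k+1), …, σ̃(ℓ+1)` (positions 1-indexed). -/
noncomputable def DC (k : ℕ) {n : ℕ} (σ : Equiv.Perm (Fin n)) : Fin n → ℕ := fun ℓ =>
  ((Finset.Icc ((ℓ : ℤ) + 1 - k + 1) ((ℓ : ℤ) + 1)).filter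
    (fun j => extPerm σ j ≤ extPerm σ ((ℓ : ℤ) + 1))).card

/-- `σ` is `k`-minimal: no index `i` with `σ(i) - σ(i+1) ≥ k`. -/
def kMinimal (k : ℕ) {n : ℕ} (σ : Equiv.Perm (Fin n)) : Prop :=
  ¬ ∃ (i : ℕ) (h : i + 1 < n),
      (σ ⟨i + 1, h⟩ : ℕ) + k ≤ (σ ⟨i, Nat.lt_of_succ_lt h⟩ : ℕ)

/-- `σ` is `k`-maximal: no index `i` with `σ(i+1) - σ(i) ≥ k`. -/
def kMaximal (k : ℕ) {n : ℕ} (σ : Equiv.Perm (Fin n)) : Prop :=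
  ¬ ∃ (i : ℕ) (h : i + 1 < n),
      (σ ⟨i, Nat.lt_of_succ_lt h⟩ : ℕ) + k ≤ (σ ⟨i + 1, h⟩ : ℕ)

/-- Shifted concatenation `σ • τ` of two permutations. -/
def shiftConcat {m n : ℕ} (σ : Equiv.Perm (Fin m)) (τ : Equiv.Perm (Fin n)) :
    Equiv.Perm (Fin (m + n)) :=
  finSumFinEquiv.symm.trans ((Equiv.sumCongr σ τ).trans finSumFinEquiv)

/-- `π` is `•`-indecomposable: no proper prefix of positions maps onto
a prefix of values. -/
def indecomposable {n : ℕ} (π : Equiv.Perm (Fin n)) : Prop :=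
  ¬ ∃ m : ℕ, 0 < m ∧ m < n ∧ ∀ i : Fin n, (i : ℕ) < m → (π i : ℕ) < m

/-!
Swapping two adjacent entries of a word that differ by at least `k` stays in the `≡_k` class and
removes exactly one inversion, so a member of the class with fewest inversions is `k`-minimal.
In a `k`-minimal word, an inversion `(a, b)` with `b - a ≥ k` always splits as inversions
`(a, c)` and `(c, b)` with `a < c < b`; by induction on `b - a`, every inversion of a
`k`-minimal `α` is forced by transitivity from inversions of span `< k`, which the whole class
shares. So `Inv α ⊆ Inv τ` on the class, and two `k`-minimal members have equal inversion sets,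
hence coincide.
-/

open Equiv

theorem Nat.exists_not_and_succ_of_le {P : ℕ → Prop} {a b : ℕ} (hab : a ≤ b) (ha : ¬ P a)
    (hb : P b) : ∃ j, a ≤ j ∧ j < b ∧ ¬ P j ∧ P (j + 1) := by
  induction b, hab using Nat.le_induction with
  | base => exact absurd hb ha
  | succ b hab ih =>
    by_cases h : P b
    · obtain ⟨j, haj, hjb, hj⟩ := ih h
      exact ⟨j, haj, by omega, hj⟩
    · exact ⟨b, hab, b.lt_succ_self, h, hb⟩

theorem Equiv.Perm.eq_of_symm_lt_symm_iff {α : Type*} [LinearOrder α] [Finite α]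
    {σ τ : Perm α} (h : ∀ a b, σ.symm a < σ.symm b ↔ τ.symm a < τ.symm b) : σ = τ := by
  have hmono : StrictMono (σ.symm ∘ τ) := fun x y hxy => by
    simpa using (h (τ x) (τ y)).2 (by simpa using hxy)
  ext x
  exact (σ.symm_apply_eq.1 (congrFun hmono.eq_id x)).symm

theorem Equiv.Perm.symm_mul_swap_apply {α : Type*} [DecidableEq α] (σ : Perm α) (p q a : α) :
    (σ * swap p q).symm a = swap p q (σ.symm a) := by
  simp [Perm.mul_def]

theorem Equiv.swap_lt_swap_iff_of_covBy {α : Type*} [LinearOrder α] {p q x y : α} (hpq : p ⋖ q)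
    (hxy : ¬ (x = p ∧ y = q)) (hyx : ¬ (x = q ∧ y = p)) :
    swap p q x < swap p q y ↔ x < y := by
  have hgt : ∀ z, p < z → q ≤ z := fun _ => hpq.ge_of_gt
  have hlt : ∀ z, z < q → z ≤ p := fun _ => hpq.le_of_lt
  have := hpq.lt
  rw [swap_apply_def, swap_apply_def]
  split_ifs <;> grind

section
variable {k n : ℕ} {σ τ ρ α : Perm (Fin n)}

theorem recoilEquiv_refl (k : ℕ) (σ : Perm (Fin n)) : recoilEquiv k n σ σ :=
  fun _ _ _ _ => Iff.rfl

theorem recoilEquiv.symm (h : recoilEquiv k n σ τ) : recoilEquiv k n τ σ :=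
  fun a b hab hgap => (h a b hab hgap).symm

theorem recoilEquiv.trans (h : recoilEquiv k n σ τ) (h' : recoilEquiv k n τ ρ) :
    recoilEquiv k n σ ρ :=
  fun a b hab hgap => (h a b hab hgap).trans (h' a b hab hgap)

theorem kMinimal_iff : kMinimal k σ ↔ ∀ p q : Fin n, p ⋖ q → (σ p : ℕ) < σ q + k := by
  simp only [kMinimal, not_exists, not_le, Fin.covBy_iff, Nat.covBy_iff_add_one_eq]
  constructor
  · rintro h ⟨p, hp⟩ ⟨q, hq⟩ rfl
    exact h p hq
  · exact fun h i hi => h _ _ rfl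

theorem mem_invSet_iff_of_lt {a b : Fin n} (hab : a < b) :
    (a, b) ∈ invSet σ ↔ ¬ σ.symm a < σ.symm b := by
  simp [invSet, hab, (σ.symm.injective.ne hab.ne').le_iff_lt]

theorem mem_invSet_trans {a b c : Fin n} (hab : (a, b) ∈ invSet σ) (hbc : (b, c) ∈ invSet σ) :
    (a, c) ∈ invSet σ :=
  ⟨hab.1.trans hbc.1, hbc.2.trans hab.2⟩

theorem invSet_injective : Function.Injective (invSet (n := n)) := by
  intro σ τ h
  refine Perm.eq_of_symm_lt_symm_iff fun a b => ?_
  rcases lt_trichotomy a b with hab | rfl | hba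
  · rw [← not_iff_not, ← mem_invSet_iff_of_lt hab, ← mem_invSet_iff_of_lt hab, h]
  · simp
  · simpa [invSet, hba] using Set.ext_iff.1 h (b, a)

theorem recoilEquiv.mem_invSet_iff (h : recoilEquiv k n σ τ) {a b : Fin n} (hab : a < b)
    (hgap : (b : ℕ) - a < k) : (a, b) ∈ invSet σ ↔ (a, b) ∈ invSet τ := by
  rw [mem_invSet_iff_of_lt hab, mem_invSet_iff_of_lt hab, h a b hab hgap]

theorem recoilEquiv_mul_swap {p q : Fin n} (hpq : p ⋖ q) (hgap : (σ q : ℕ) + k ≤ σ p) :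
    recoilEquiv k n σ (σ * swap p q) := by
  intro a b hab hgapab
  rw [Perm.symm_mul_swap_apply, Perm.symm_mul_swap_apply, swap_lt_swap_iff_of_covBy hpq]
  all_goals
    rintro ⟨ha, hb⟩
    rw [σ.symm_apply_eq] at ha hb
    subst ha hb
    omega

theorem invSet_mul_swap_ssubset {p q : Fin n} (hpq : p ⋖ q) (hlt : σ q < σ p) :
    invSet (σ * swap p q) ⊂ invSet σ := by
  refine (Set.ssubset_iff_of_subset ?_).2 ⟨(σ q, σ p), ⟨hlt, by simpa using hpq.lt⟩, ?_⟩
  · rintro ⟨a, b⟩ ⟨hab, hinv⟩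
    refine ⟨hab, ?_⟩
    rw [Perm.symm_mul_swap_apply, Perm.symm_mul_swap_apply] at hinv
    by_cases hpq' : σ.symm b = p ∧ σ.symm a = q
    · rw [hpq'.1, hpq'.2]
      exact hpq.lt
    by_cases hqp : σ.symm b = q ∧ σ.symm a = p
    · rw [σ.symm_apply_eq, σ.symm_apply_eq] at hqp
      exact absurd (hqp.2 ▸ hqp.1 ▸ hab) hlt.not_gt
    exact (swap_lt_swap_iff_of_covBy hpq hpq' hqp).1 hinv
  · rintro ⟨-, h⟩
    simp only [Perm.symm_mul_swap_apply, symm_apply_apply, swap_apply_left, swap_apply_right]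
      at h
    exact h.not_gt hpq.lt

theorem exists_recoilEquiv_invSet_ssubset (h : ¬ kMinimal k σ) :
    ∃ τ, recoilEquiv k n σ τ ∧ invSet τ ⊂ invSet σ := by
  simp only [kMinimal_iff, not_forall, not_lt] at h
  obtain ⟨p, q, hpq, hgap⟩ := h
  have hlt : σ q < σ p :=
    lt_of_le_of_ne (Fin.le_def.2 (by omega)) (σ.injective.ne hpq.lt.ne')
  exact ⟨σ * swap p q, recoilEquiv_mul_swap hpq hgap, invSet_mul_swap_ssubset hpq hlt⟩

theorem exists_recoilEquiv_kMinimal (k : ℕ) (σ : Perm (Fin n)) :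
    ∃ α, recoilEquiv k n σ α ∧ kMinimal k α := by
  obtain ⟨α, hσα, hα⟩ := Set.exists_min_image {τ | recoilEquiv k n σ τ}
    (fun τ => (invSet τ).ncard) (Set.toFinite _) ⟨σ, recoilEquiv_refl k σ⟩
  refine ⟨α, hσα, ?_⟩
  by_contra hnot
  obtain ⟨β, hαβ, hβ⟩ := exists_recoilEquiv_invSet_ssubset hnot
  exact (hα β (hσα.trans hαβ)).not_gt (Set.ncard_lt_ncard hβ)

-- `c` is the upper entry of the last drop from above `a` to at most `a` between the positions
-- of `b` and `a`; `k`-minimality bounds that drop, so `c < b`.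
theorem kMinimal.exists_mem_invSet_of_add_le (hα : kMinimal k α) {a b : Fin n}
    (hab : (a, b) ∈ invSet α) (hgap : (a : ℕ) + k ≤ b) :
    ∃ c, (a, c) ∈ invSet α ∧ (c, b) ∈ invSet α := by
  obtain ⟨hab, hinv⟩ : a < b ∧ α.symm b < α.symm a := hab
  have hq := (α.symm a).2
  obtain ⟨j, hpj, hjq, hj, hj'⟩ := Nat.exists_not_and_succ_of_le
    (P := fun i => ∀ h : i < n, α ⟨i, h⟩ ≤ a) (Fin.le_def.1 hinv.le)
    (by simpa using hab) (by simp)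
  have hjn : j + 1 < n := (Nat.succ_le_of_lt hjq).trans_lt hq
  set c := α ⟨j, j.lt_succ_self.trans hjn⟩ with hc
  have hac : a < c := not_le.1 fun hle => hj fun _ => hle
  have hdrop : (c : ℕ) < α ⟨j + 1, hjn⟩ + k :=
    kMinimal_iff.1 hα _ _ (by simp [Fin.covBy_iff])
  have hcb : c < b := Fin.lt_def.2 <|
    hdrop.trans_le ((Nat.add_le_add_right (Fin.le_def.1 (hj' hjn)) k).trans hgap)
  have hpc : α.symm b < α.symm c := by
    rw [hc, Equiv.symm_apply_apply, Fin.lt_def]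
    refine lt_of_le_of_ne hpj fun hbj => hcb.ne' ?_
    rw [hc, ← α.apply_symm_apply b]
    exact congrArg α (Fin.ext hbj)
  exact ⟨c, ⟨hac, by simpa [hc, Fin.lt_def] using hjq⟩, ⟨hcb, hpc⟩⟩

theorem kMinimal.invSet_subset (hα : kMinimal k α) (h : recoilEquiv k n α τ) :
    invSet α ⊆ invSet τ := by
  rintro ⟨a, b⟩ hab
  induction hd : (b : ℕ) - a using Nat.strong_induction_on generalizing a b with
  | _ d ih =>
    have hab' : a < b := hab.1
    by_cases hshort : (b : ℕ) - a < k
    · exact (h.mem_invSet_iff hab' hshort).1 hab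
    obtain ⟨c, hac, hcb⟩ := hα.exists_mem_invSet_of_add_le hab (by omega)
    have hac' : a < c := hac.1
    have hcb' : c < b := hcb.1
    exact mem_invSet_trans (ih _ (by omega) a c hac rfl) (ih _ (by omega) c b hcb rfl)

end

theorem recoil_class_unique_min_general (k n : ℕ) (σ : Equiv.Perm (Fin n)) :
    ∃ α : Equiv.Perm (Fin n),
      recoilEquiv k n σ α ∧ kMinimal k α ∧
      (∀ τ, recoilEquiv k n σ τ → invSet α ⊆ invSet τ) ∧
      (∀ β, recoilEquiv k n σ β → kMinimal k β → β = α) := by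
  obtain ⟨α, hσα, hα⟩ := exists_recoilEquiv_kMinimal k σ
  refine ⟨α, hσα, hα, fun τ hστ => hα.invSet_subset (hσα.symm.trans hστ),
    fun β hσβ hβ => ?_⟩
  have hβα : recoilEquiv k n β α := hσβ.symm.trans hσα
  exact invSet_injective ((hβ.invSet_subset hβα).antisymm (hα.invSet_subset hβα.symm))

/-- every `≡_k` class contains exactly one `k`-minimal
permutation `α`, and `α` is the minimum of the class for the right weak
order (`Inv(α) ⊆ Inv(σ)` for all `σ` in the class). -/
theorem recoil_class_unique_min (k n : ℕ) (hk : 2 ≤ k) (σ : Equiv.Perm (Fin n)) :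
    ∃ α : Equiv.Perm (Fin n),
      recoilEquiv k n σ α ∧ kMinimal k α ∧
      (∀ τ, recoilEquiv k n σ τ → invSet α ⊆ invSet τ) ∧
      (∀ β, recoilEquiv k n σ β → kMinimal k β → β = α) :=
  recoil_class_unique_min_general k n σ
end

section
/- Let k ≥ 2 and n ≥ 0. For every k-descent class D = {σ ∈ S_n : DC_k(σ) = C} (for a fixed code C in the image of DC_k) there exist permutations α, ω ∈ D such that D = {σ ∈ S_n : Inv(α⁻¹) ⊆ Inv(σ⁻¹) ⊆ Inv(ω⁻¹)}; in other words, every k-descent class is an interval of the left weak order. -/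
/-!
The code `DC k σ` at `ℓ` counts, up to a term independent of `σ`, the entries of `σ` in the
`k - 1` positions before `ℓ` that are smaller than `σ ℓ`; by induction on `ℓ` these counts
determine, and are determined by, how `σ` orders any two positions at distance `< k`.
So `τ` has the code of `σ` iff `τ` inverts every pair of positions joined by a chain of short
descents of `σ` and no pair joined by a chain of short ascents of `σ`. Both chain relations are
transitive and co-transitive on increasing triples, hence the first is the inversion set of some
`α` and the complement of the second the inversion set of some `ω`.
-/

open Finset Equiv

theorem exists_perm_lt_iff {n : ℕ} (r : Fin n → Fin n → Prop)
    (hasymm : ∀ i j, r i j → ¬ r j i) (htrans : ∀ i j l, r i j → r j l → r i l)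
    (htotal : ∀ i j, i ≠ j → r i j ∨ r j i) :
    ∃ π : Perm (Fin n), ∀ i j, π i < π j ↔ r i j := by
  classical
  let rank : Fin n → Fin n := fun i =>
    ⟨#{m | r m i}, by
      simpa using card_lt_univ_of_notMem (s := {m | r m i}) (x := i) (by simpa using hasymm i i)⟩
  have rank_lt_rank {i j} (hij : r i j) : rank i < rank j := by
    have hsub : ({m | r m i} : Finset (Fin n)) ⊆ ({m | r m j} : Finset (Fin n)) :=
      monotone_filter_right _ fun m _ hmi => htrans m i j hmi hij
    refine Fin.mk_lt_mk.mpr (card_lt_card ((ssubset_iff_of_subset hsub).mpr ⟨i, ?_⟩))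
    simpa [hij] using hasymm i i
  have rank_injective : Function.Injective rank := fun i j hrank => by
    by_contra hne
    rcases htotal i j hne with hij | hji
    exacts [(rank_lt_rank hij).ne hrank, (rank_lt_rank hji).ne' hrank]
  refine ⟨.ofBijective rank (Finite.injective_iff_bijective.mp rank_injective), fun i j => ?_⟩
  refine ⟨fun hlt => ?_, rank_lt_rank⟩
  rcases htotal i j (fun h => hlt.ne (congrArg rank h)) with hij | hji
  exacts [hij, absurd (rank_lt_rank hji) hlt.asymm]

structure IsInversionRel {α : Type*} [LinearOrder α] (S : α → α → Prop) : Prop where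
  trans : ∀ {i j l}, i < j → j < l → S i j → S j l → S i l
  cotrans : ∀ {i j l}, i < j → j < l → S i l → S i j ∨ S j l

namespace IsInversionRel

variable {α : Type*} [LinearOrder α] {S : α → α → Prop}

theorem compl (hS : IsInversionRel S) : IsInversionRel fun i j => ¬ S i j where
  trans hij hjl hSij hSjl hSil := (hS.cotrans hij hjl hSil).elim hSij hSjl
  cotrans hij hjl hSil := not_and_or.mp fun h => hSil (hS.trans hij hjl h.1 h.2)

/-- The order in which a permutation with inversion set `S` lists the positions. -/
def precedes (S : α → α → Prop) (i j : α) : Prop :=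
  (i < j ∧ ¬ S i j) ∨ (j < i ∧ S j i)

theorem precedes_asymm (i j : α) : precedes S i j → ¬ precedes S j i := by
  unfold precedes
  rintro (⟨hij, hS⟩ | ⟨hji, hS⟩) (⟨hji', hS'⟩ | ⟨hij', hS'⟩)
  exacts [hij.asymm hji', hS hS', hS' hS, hji.asymm hij']

theorem precedes_total {i j : α} (hne : i ≠ j) : precedes S i j ∨ precedes S j i := by
  unfold precedes
  rcases hne.lt_or_gt with h | h
  · exact (em (S i j)).symm.imp (fun hS => .inl ⟨h, hS⟩) (fun hS => .inr ⟨h, hS⟩)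
  · exact ((em (S j i)).symm.imp (fun hS => .inl ⟨h, hS⟩) (fun hS => .inr ⟨h, hS⟩)).symm

theorem precedes_trans (hS : IsInversionRel S) (i j l : α) :
    precedes S i j → precedes S j l → precedes S i l := by
  unfold precedes
  rintro (⟨hij, hSij⟩ | ⟨hji, hSji⟩) (⟨hjl, hSjl⟩ | ⟨hlj, hSlj⟩)
  · exact .inl ⟨hij.trans hjl, fun hSil => (hS.cotrans hij hjl hSil).elim hSij hSjl⟩
  · rcases lt_trichotomy i l with hil | rfl | hli
    · exact .inl ⟨hil, fun hSil => hSij (hS.trans hil hlj hSil hSlj)⟩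
    · exact absurd hSlj hSij
    · exact .inr ⟨hli, (hS.cotrans hli hij hSlj).resolve_right hSij⟩
  · rcases lt_trichotomy i l with hil | rfl | hli
    · exact .inl ⟨hil, fun hSil => hSjl (hS.trans hji hil hSji hSil)⟩
    · exact absurd hSji hSjl
    · exact .inr ⟨hli, (hS.cotrans hjl hli hSji).resolve_left hSjl⟩
  · exact .inr ⟨hlj.trans hji, hS.trans hlj hji hSlj hSji⟩

theorem exists_perm {n : ℕ} {S : Fin n → Fin n → Prop} (hS : IsInversionRel S) :
    ∃ π : Perm (Fin n), ∀ i j, i < j → (π j < π i ↔ S i j) := by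
  obtain ⟨π, hπ⟩ := exists_perm_lt_iff (precedes S) precedes_asymm hS.precedes_trans
    fun _ _ => precedes_total
  refine ⟨π, fun i j hij => ?_⟩
  simp [hπ, precedes, hij, hij.not_gt]

end IsInversionRel

section NearChain

variable {n k : ℕ} {r : Fin n → Fin n → Prop}

def nearChain (k : ℕ) (r : Fin n → Fin n → Prop) : Fin n → Fin n → Prop :=
  Relation.TransGen fun i j => i < j ∧ (j : ℕ) < i + k ∧ r i j

theorem nearChain_single {i j : Fin n} (hij : i < j) (hjk : (j : ℕ) < i + k) (h : r i j) :
    nearChain k r i j :=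
  .single ⟨hij, hjk, h⟩

theorem nearChain_le {p : Fin n → Fin n → Prop} (hp : ∀ a b c, p a b → p b c → p a c)
    (h : ∀ i j : Fin n, i < j → (j : ℕ) < i + k → r i j → p i j) : nearChain k r ≤ p :=
  haveI : IsTrans (Fin n) p := ⟨hp⟩
  Relation.transGen_minimal fun i j hij => h i j hij.1 hij.2.1 hij.2.2

theorem isInversionRel_nearChain (htrans : ∀ a b c, r a b → r b c → r a c)
    (htotal : ∀ a b, a ≠ b → r a b ∨ r b a) : IsInversionRel (nearChain k r) := by
  refine ⟨fun _ _ => Relation.TransGen.trans, fun {i j l} hij hjl hil => ?_⟩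
  -- a step `a → b` jumping over `j` splits at `j`, whichever way `r` compares `a` and `j`
  have split {a b : Fin n} (hstep : (b : ℕ) < a + k) (hab : r a b) (haj : a < j) (hjb : j < b) :
      nearChain k r a j ∨ nearChain k r j b := by
    rcases htotal a j haj.ne with h | h
    · exact .inl (nearChain_single haj (by omega) h)
    · exact .inr (nearChain_single hjb (by omega) (htrans _ _ _ h hab))
  induction hil with
  | single hstep => exact split hstep.2.1 hstep.2.2 hij hjl
  | @tail m l him hstep ih =>
    rcases lt_trichotomy j m with hjm | rfl | hmj
    · exact (ih hjm).imp_right (·.tail hstep)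
    · exact .inl him
    · exact (split hstep.2.1 hstep.2.2 hmj hjl).imp_left him.trans

end NearChain

section DescentCode

variable {n k : ℕ}

theorem extPerm_of_nonpos (σ : Perm (Fin n)) {j : ℤ} (hj : j ≤ 0) : extPerm σ j = j :=
  dif_neg (by omega)

theorem extPerm_natCast_add_one (σ : Perm (Fin n)) (m : Fin n) :
    extPerm σ ((m : ℤ) + 1) = (σ m : ℤ) + 1 := by
  rw [extPerm, dif_pos ⟨by omega, by omega⟩]
  simp

def window (k : ℕ) (j : Fin n) : Finset (Fin n) :=
  {m | m < j ∧ (j : ℕ) < m + k}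

def windowRank (k : ℕ) (σ : Perm (Fin n)) (j : Fin n) : ℕ :=
  #{m ∈ window k j | σ m < σ j}

/-- The window of `DC k σ ℓ` splits into the part outside `[1, ℓ]`, which is counted for every
`σ`, and the positions `m + 1` with `m ∈ window k ℓ`, which are counted iff `σ m < σ ℓ`. -/
theorem DC_apply (σ : Perm (Fin n)) (ℓ : Fin n) :
    DC k σ ℓ = #{j ∈ Icc ((ℓ : ℤ) + 1 - k + 1) ((ℓ : ℤ) + 1) | j ≤ 0 ∨ j = (ℓ : ℤ) + 1} +
      windowRank k σ ℓ := by
  have hℓ := extPerm_natCast_add_one σ ℓ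
  have hinj : Function.Injective fun m : Fin n => (m : ℤ) + 1 := fun a b h => by
    simpa [Fin.ext_iff] using h
  rw [DC, ← card_filter_add_card_filter_not (fun j : ℤ => j ≤ 0 ∨ j = (ℓ : ℤ) + 1),
    filter_filter, filter_filter, windowRank,
    ← card_image_of_injective _ hinj]
  congr 2
  · refine filter_congr fun j _ => and_iff_right_of_imp ?_
    rintro (hj | rfl)
    · rw [extPerm_of_nonpos σ hj, hℓ]
      omega
    · exact le_rfl
  · ext j
    simp only [mem_filter, mem_Icc, mem_image, window, mem_univ, true_and]
    constructor
    · rintro ⟨⟨hlo, hhi⟩, hP, hQ⟩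
      obtain ⟨m, rfl⟩ : ∃ m : ℕ, j = m + 1 := ⟨(j - 1).toNat, by omega⟩
      have hm : m < n := by omega
      rw [extPerm_natCast_add_one σ ⟨m, hm⟩, hℓ] at hP
      have hmℓ : (⟨m, hm⟩ : Fin n) < ℓ := by simp only [Fin.lt_def]; omega
      refine ⟨⟨m, hm⟩, ⟨⟨hmℓ, by simp only; omega⟩, ?_⟩, rfl⟩
      exact lt_of_le_of_ne (by simp only [Fin.le_def]; omega) (σ.injective.ne hmℓ.ne)
    · rintro ⟨m, ⟨⟨hmℓ, hmk⟩, hσ⟩, rfl⟩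
      rw [extPerm_natCast_add_one, hℓ]
      simp only [Fin.lt_def] at hmℓ hσ
      omega

theorem DC_eq_DC_iff_windowRank {σ τ : Perm (Fin n)} :
    DC k σ = DC k τ ↔ windowRank k σ = windowRank k τ := by
  simp only [funext_iff, DC_apply, Nat.add_left_cancel_iff]

end DescentCode

section RankInWindow

variable {α β : Type*} [LinearOrder β]

theorem lt_iff_card_filter_le_le_card_filter_lt (f : α → β) {W : Finset α} {i : α} (hi : i ∈ W)
    (x : α) : f i < f x ↔ #{m ∈ W | f m ≤ f i} ≤ #{m ∈ W | f m < f x} := by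
  refine ⟨fun h => card_le_card (monotone_filter_right W fun m _ hm => hm.trans_lt h), ?_⟩
  contrapose!
  intro h
  refine card_lt_card ((ssubset_iff_of_subset ?_).mpr ⟨i, by simp [hi], by simp [h]⟩)
  exact monotone_filter_right W fun m _ hm => (hm.trans_le h).le

theorem lt_iff_lt_of_card_filter_lt_eq {f g : α → β} {W : Finset α} {x i : α}
    (hW : ∀ a ∈ W, ∀ b ∈ W, f a ≤ f b ↔ g a ≤ g b)
    (hx : #{m ∈ W | f m < f x} = #{m ∈ W | g m < g x}) (hi : i ∈ W) :
    f i < f x ↔ g i < g x := by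
  rw [lt_iff_card_filter_le_le_card_filter_lt f hi, lt_iff_card_filter_le_le_card_filter_lt g hi,
    hx, filter_congr fun m hm => hW m hm i hi]

end RankInWindow

section NearOrder

variable {n k : ℕ}

/-- This is `recoilEquiv k n σ⁻¹ τ⁻¹`, read on positions instead of values. -/
def NearOrderAgree (k : ℕ) (σ τ : Perm (Fin n)) : Prop :=
  ∀ i j : Fin n, i < j → (j : ℕ) < i + k → (σ i < σ j ↔ τ i < τ j)

theorem windowRank_eq_of_nearOrderAgree {σ τ : Perm (Fin n)} (h : NearOrderAgree k σ τ) :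
    windowRank k σ = windowRank k τ :=
  funext fun j => congrArg card <| filter_congr fun m hm => by
    simp only [window, mem_filter, mem_univ, true_and] at hm
    exact h m j hm.1 hm.2

theorem nearOrderAgree_of_windowRank_eq {σ τ : Perm (Fin n)}
    (h : windowRank k σ = windowRank k τ) : NearOrderAgree k σ τ := by
  intro i j
  induction j using WellFoundedLT.induction generalizing i with
  | _ j ih =>
  intro hij hjk
  have hwindow {m} : m ∈ window k j ↔ m < j ∧ (j : ℕ) < m + k := by simp [window]
  refine lt_iff_lt_of_card_filter_lt_eq (fun a ha b hb => ?_) (congrFun h j)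
    (hwindow.mpr ⟨hij, hjk⟩)
  rw [hwindow] at ha hb
  rcases lt_trichotomy a b with hab | rfl | hba
  · rw [(σ.injective.ne hab.ne).le_iff_lt, (τ.injective.ne hab.ne).le_iff_lt]
    exact ih b hb.1 a hab (by omega)
  · simp
  · rw [← not_lt, ← not_lt, ih a ha.1 b hba (by omega)]

theorem DC_eq_DC_iff {σ τ : Perm (Fin n)} : DC k σ = DC k τ ↔ NearOrderAgree k σ τ := by
  rw [DC_eq_DC_iff_windowRank]
  exact ⟨nearOrderAgree_of_windowRank_eq, windowRank_eq_of_nearOrderAgree⟩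

end NearOrder

section Interval

variable {n k : ℕ}

theorem NearOrderAgree.gt_iff_gt {σ τ : Perm (Fin n)} (h : NearOrderAgree k σ τ) {i j : Fin n}
    (hij : i < j) (hjk : (j : ℕ) < i + k) : σ j < σ i ↔ τ j < τ i := by
  rw [← not_le, ← not_le, (σ.injective.ne hij.ne).le_iff_lt, (τ.injective.ne hij.ne).le_iff_lt,
    h i j hij hjk]

theorem nearOrderAgree_iff_invSet_subset {σ τ α ω : Perm (Fin n)}
    (hα : ∀ i j, i < j → (α j < α i ↔ nearChain k (fun a b => σ b < σ a) i j))
    (hω : ∀ i j, i < j → (ω j < ω i ↔ ¬ nearChain k (fun a b => σ a < σ b) i j)) :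
    NearOrderAgree k σ τ ↔ invSet α⁻¹ ⊆ invSet τ⁻¹ ∧ invSet τ⁻¹ ⊆ invSet ω⁻¹ := by
  have mem_invSet (π : Perm (Fin n)) {i j : Fin n} : (i, j) ∈ invSet π⁻¹ ↔ i < j ∧ π j < π i :=
    Iff.rfl
  constructor
  · intro h
    refine ⟨fun ⟨i, j⟩ ⟨hij, hαij⟩ => ⟨hij, ?_⟩, fun ⟨i, j⟩ ⟨hij, hτij⟩ => ⟨hij, ?_⟩⟩
    · exact nearChain_le (p := fun a b => τ b < τ a) (fun _ _ _ h₁ h₂ => h₂.trans h₁)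
        (fun a b hab hbk => (h.gt_iff_gt hab hbk).1) i j ((hα i j hij).1 hαij)
    · refine (hω i j hij).2 fun hasc => hτij.asymm ?_
      exact nearChain_le (p := fun a b => τ a < τ b) (fun _ _ _ => lt_trans)
        (fun a b hab hbk => (h a b hab hbk).1) i j hasc
  · rintro ⟨hατ, hτω⟩ i j hij hjk
    rcases (σ.injective.ne hij.ne).lt_or_gt with hσ | hσ
    · refine iff_of_true hσ (not_le.mp fun hτ => ?_)
      have hτij := (mem_invSet τ).2 ⟨hij, (τ.injective.ne hij.ne).symm.lt_of_le hτ⟩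
      exact (hω i j hij).1 ((mem_invSet ω).1 (hτω hτij)).2 (nearChain_single hij hjk hσ)
    · have hαij := (mem_invSet α).2 ⟨hij, (hα i j hij).2 (nearChain_single hij hjk hσ)⟩
      exact iff_of_false hσ.asymm ((mem_invSet τ).1 (hατ hαij)).2.asymm

end Interval

theorem descent_class_is_interval_general (k n : ℕ)
    (σ : Equiv.Perm (Fin n)) :
    ∃ α ω : Equiv.Perm (Fin n), DC k α = DC k σ ∧ DC k ω = DC k σ ∧
      ∀ τ, DC k τ = DC k σ ↔
        (invSet α⁻¹ ⊆ invSet τ⁻¹ ∧ invSet τ⁻¹ ⊆ invSet ω⁻¹) := by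
  have hdesc : IsInversionRel (nearChain k fun a b => σ b < σ a) :=
    isInversionRel_nearChain (fun _ _ _ h₁ h₂ => h₂.trans h₁)
      fun _ _ hab => (σ.injective.ne hab).lt_or_gt.symm
  have hasc : IsInversionRel (nearChain k fun a b => σ a < σ b) :=
    isInversionRel_nearChain (fun _ _ _ => lt_trans) fun _ _ hab => (σ.injective.ne hab).lt_or_gt
  obtain ⟨α, hα⟩ := hdesc.exists_perm
  obtain ⟨ω, hω⟩ := hasc.compl.exists_perm
  have hclass (τ : Perm (Fin n)) :
      DC k τ = DC k σ ↔ invSet α⁻¹ ⊆ invSet τ⁻¹ ∧ invSet τ⁻¹ ⊆ invSet ω⁻¹ := by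
    rw [eq_comm, DC_eq_DC_iff, nearOrderAgree_iff_invSet_subset hα hω]
  have hσ := (hclass σ).1 rfl
  exact ⟨α, ω, (hclass α).2 ⟨subset_rfl, hσ.1.trans hσ.2⟩,
    (hclass ω).2 ⟨hσ.1.trans hσ.2, subset_rfl⟩, hclass⟩

/-- every `k`-descent class is an interval of the left weak
order: for the class of permutations having the same `k`-descent code as `σ`,
there are `α, ω` in the class such that the class is exactly
`{τ : Inv(α⁻¹) ⊆ Inv(τ⁻¹) ⊆ Inv(ω⁻¹)}`. -/
theorem descent_class_is_interval (k n : ℕ) (hk : 2 ≤ k)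
    (σ : Equiv.Perm (Fin n)) :
    ∃ α ω : Equiv.Perm (Fin n), DC k α = DC k σ ∧ DC k ω = DC k σ ∧
      ∀ τ, DC k τ = DC k σ ↔
        (invSet α⁻¹ ⊆ invSet τ⁻¹ ∧ invSet τ⁻¹ ⊆ invSet ω⁻¹) :=
  descent_class_is_interval_general k n σ
end
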